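/- Let d ≥ 1 and let λ, λ̂ ∈ ℂ^d satisfy |λ_k| ≤ 1 and |λ̂_k| ≤ 1 for every k ∈ {1,…,d}. Let R_1, …, R_d and R̃_1, …, R̃_d be given complex numbers, and for every integer h ≥ d+1 define R_h := Σ_{k=1}^{d} (−1)^{k+1} e_k(λ) · R_{h−k} and R̃_h := Σ_{k=1}^{d} (−1)^{k+1} e_k(λ̂) · R̃_{h−k}. Then for every integer h ≥ 1, |R̃_h − R_h| ≤ 2^{2d} · h · ∏_{k=2}^{d} ( Σ_{j=0}^{h−1} |λ_k|^j ) · ∏_{k=2}^{d} ( Σ_{j=0}^{h−1} |λ̂_k|^j ) · max_{1 ≤ h' ≤ 3d} |R_{h'} − R̃_{h'}|. -/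

import Mathlib

open Finset

/-- The `k`-th elementary symmetric polynomial of `lam 1, …, lam d`. -/
noncomputable def esymm (d : ℕ) (lam : Fin d → ℂ) (k : ℕ) : ℂ :=
  ∑ S ∈ Finset.powersetCard k (Finset.univ : Finset (Fin d)), ∏ j ∈ S, lam j

/-!
Write `S` for the shift `(S A) n = A (n + 1)` on sequences. The two recurrences say that
`∏ₖ (S - λₖ)` kills `R` and `∏ₖ (S - λ̂ₖ)` kills `R̃` from index `1` on, so their product kills
`D = R̃ - R`. Peel the factors off from the outside: once `S - λ₁` is removed, what is left is
bounded by its value at `1`; once `S - λ̂₁` is removed as well, it grows at most linearly; and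
removing any further factor `S - μ` multiplies the bound by `∑_{j<h} |μ|^j`, by unrolling
`‖B (n+1)‖ ≤ |μ| ‖B n‖ + f n`. The values at `1` of all the partial products are at most
`2^{2d - 1}` times the largest of the first `2d` errors.
-/

open Polynomial

section Shift

variable (R : Type*) [CommRing R]

def seqShift : Module.End R (ℕ → R) := LinearMap.funLeft R R Nat.succ

variable {R}

theorem seqShift_pow_apply (A : ℕ → R) (i n : ℕ) : (seqShift R ^ i) A n = A (n + i) := by
  induction i generalizing A with
  | zero => rfl
  | succ i ih => rw [pow_succ, Module.End.mul_apply, ih]; rfl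

theorem aeval_seqShift_apply (p : R[X]) (A : ℕ → R) (n : ℕ) :
    aeval (seqShift R) p A n = ∑ i ∈ range (p.natDegree + 1), p.coeff i * A (n + i) := by
  simp [aeval_eq_sum_range, seqShift_pow_apply]

theorem aeval_seqShift_X_sub_C_mul_apply (μ : R) (q : R[X]) (A : ℕ → R) (n : ℕ) :
    aeval (seqShift R) ((X - C μ) * q) A n =
      aeval (seqShift R) q A (n + 1) - μ * aeval (seqShift R) q A n := by
  simp [seqShift, LinearMap.funLeft_apply]

theorem aeval_seqShift_apply_eq_zero (p : R[X]) {A : ℕ → R} {m : ℕ}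
    (hA : ∀ n, m ≤ n → A n = 0) (n : ℕ) (hn : m ≤ n) : aeval (seqShift R) p A n = 0 := by
  simp [aeval_seqShift_apply, hA _ (hn.trans (Nat.le_add_right n _))]

theorem aeval_seqShift_mul_apply_sub_eq_zero {p q : R[X]} {A B : ℕ → R} {m : ℕ}
    (hA : ∀ n, m ≤ n → aeval (seqShift R) p A n = 0)
    (hB : ∀ n, m ≤ n → aeval (seqShift R) q B n = 0) (n : ℕ) (hn : m ≤ n) :
    aeval (seqShift R) (p * q) (A - B) n = 0 := by
  have hA' : aeval (seqShift R) (p * q) A n = 0 := by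
    rw [mul_comm, map_mul, Module.End.mul_apply]
    exact aeval_seqShift_apply_eq_zero q hA n hn
  have hB' : aeval (seqShift R) (p * q) B n = 0 := by
    rw [map_mul, Module.End.mul_apply]
    exact aeval_seqShift_apply_eq_zero p hB n hn
  rw [map_sub, Pi.sub_apply, hA', hB', sub_zero]

theorem aeval_seqShift_C_mul_X_pow_apply (a : R) (k : ℕ) (A : ℕ → R) (n : ℕ) :
    aeval (seqShift R) (C a * X ^ k) A n = a * A (n + k) := by
  simp [seqShift_pow_apply, Module.algebraMap_end_apply]

end Shift

theorem aeval_seqShift_prod_X_sub_C_eq_zero {d : ℕ} (lam : Fin d → ℂ) (R : ℕ → ℂ)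
    (hR : ∀ h : ℕ, d + 1 ≤ h →
      R h = ∑ k ∈ Finset.Icc 1 d, (-1 : ℂ) ^ (k + 1) * esymm d lam k * R (h - k))
    (n : ℕ) (hn : 1 ≤ n) : aeval (seqShift ℂ) (∏ i, (X - C (lam i))) R n = 0 := by
  have hvieta : ∏ i, (X - C (lam i)) =
      ∑ j ∈ range (d + 1), C ((-1) ^ j * esymm d lam j) * X ^ (d - j) := by
    have he : ∀ j, (univ.val.map lam).esymm j = esymm d lam j := fun j =>
      Finset.esymm_map_val lam univ j
    have := Multiset.prod_X_sub_X_eq_sum_esymm (univ.val.map lam)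
    rw [Multiset.map_map] at this
    simp only [he, Multiset.card_map, card_val, card_univ, Fintype.card_fin] at this
    refine (prod_eq_multiset_prod _ _).trans (this.trans ?_)
    exact sum_congr rfl fun j _ => by rw [C_mul, C_pow, C_neg, C_1, mul_assoc]
  have hrange : range (d + 1) = insert 0 (Icc 1 d) := by
    ext j
    simp only [mem_range, Order.lt_add_one_iff, mem_insert, mem_Icc]
    omega
  have he0 : esymm d lam 0 = 1 := by simp [esymm]
  rw [hvieta, hrange, sum_insert (by simp)]
  simp only [map_add, map_sum, LinearMap.add_apply, LinearMap.sum_apply, Pi.add_apply,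
    Finset.sum_apply, aeval_seqShift_C_mul_X_pow_apply]
  rw [he0, pow_zero, one_mul, one_mul, Nat.sub_zero, hR (n + d) (by omega), ← sum_add_distrib]
  refine sum_eq_zero fun k hk => ?_
  rw [Nat.add_sub_assoc (mem_Icc.mp hk).2, pow_succ]
  ring

theorem geom_sum_le_of_le_one {r : ℝ} (h₀ : 0 ≤ r) (h₁ : r ≤ 1) (n : ℕ) :
    ∑ j ∈ range n, r ^ j ≤ n := by
  simpa using sum_le_card_nsmul (range n) _ 1 fun j _ => pow_le_one₀ h₀ h₁

section Estimates

variable {𝕜 : Type*} [NormedField 𝕜]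

theorem norm_le_norm_one_of_succ_eq_mul {μ : 𝕜} (hμ : ‖μ‖ ≤ 1) {B : ℕ → 𝕜}
    (hB : ∀ n, 1 ≤ n → B (n + 1) = μ * B n) (n : ℕ) (hn : 1 ≤ n) : ‖B n‖ ≤ ‖B 1‖ := by
  induction n, hn using Nat.le_induction with
  | base => rfl
  | succ n hn ih =>
    rw [hB n hn, norm_mul]
    exact (mul_le_of_le_one_left (norm_nonneg _) hμ).trans ih

theorem norm_le_mul_geom_sum {μ : 𝕜} {B : ℕ → 𝕜} {f : ℕ → ℝ} (hf : Monotone f)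
    (h₁ : ‖B 1‖ ≤ f 1) (hB : ∀ n, 1 ≤ n → ‖B (n + 1) - μ * B n‖ ≤ f n) (n : ℕ) (hn : 1 ≤ n) :
    ‖B n‖ ≤ f n * ∑ j ∈ range n, ‖μ‖ ^ j := by
  induction n, hn using Nat.le_induction with
  | base => simpa using h₁
  | succ n hn ih =>
    have hfn : 0 ≤ f n := (norm_nonneg _).trans (h₁.trans (hf hn))
    calc ‖B (n + 1)‖ ≤ ‖μ * B n‖ + ‖B (n + 1) - μ * B n‖ := norm_le_insert' _ _
      _ ≤ ‖μ‖ * (f n * ∑ j ∈ range n, ‖μ‖ ^ j) + f n := by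
        rw [norm_mul]; gcongr; exact hB n hn
      _ = f n * ∑ j ∈ range (n + 1), ‖μ‖ ^ j := by rw [geom_sum_succ]; ring
      _ ≤ f (n + 1) * ∑ j ∈ range (n + 1), ‖μ‖ ^ j := by
        gcongr
        exact hf n.le_succ

variable {ι : Type*} [DecidableEq ι]

theorem norm_aeval_seqShift_prod_X_sub_C_le (ν : ι → 𝕜) (A : ℕ → 𝕜) {M : ℝ} (t : Finset ι)
    (hν : ∀ i ∈ t, ‖ν i‖ ≤ 1) (n : ℕ) (hA : ∀ j, n ≤ j → j ≤ n + #t → ‖A j‖ ≤ M) :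
    ‖aeval (seqShift 𝕜) (∏ i ∈ t, (X - C (ν i))) A n‖ ≤ 2 ^ #t * M := by
  induction t using Finset.induction_on generalizing n with
  | empty => simpa using hA n le_rfl (by simp)
  | insert a t hat ih =>
    have hcard := card_insert_of_notMem hat
    set B := aeval (seqShift 𝕜) (∏ i ∈ t, (X - C (ν i))) A
    have hνt : ∀ i ∈ t, ‖ν i‖ ≤ 1 := fun i hi => hν i (mem_insert_of_mem hi)
    have hB₁ : ‖B (n + 1)‖ ≤ 2 ^ #t * M := ih hνt (n + 1) fun j hj hj' => hA j (by omega) (by omega)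
    have hB₀ : ‖B n‖ ≤ 2 ^ #t * M := ih hνt n fun j hj hj' => hA j hj (by omega)
    rw [prod_insert hat, aeval_seqShift_X_sub_C_mul_apply, hcard, pow_succ]
    calc ‖B (n + 1) - ν a * B n‖ ≤ ‖B (n + 1)‖ + ‖ν a‖ * ‖B n‖ := by
          rw [← norm_mul]; exact norm_sub_le _ _
      _ ≤ 2 ^ #t * M + 1 * (2 ^ #t * M) := by
          gcongr
          exact hν a (mem_insert_self a t)
      _ = 2 ^ #t * 2 * M := by ring

theorem norm_le_mul_prod_geom_sum (ν : ι → 𝕜) (A : ℕ → 𝕜) (s : Finset ι) {f : ℕ → ℝ}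
    (hf : Monotone f) (hf₀ : ∀ n, 0 ≤ f n)
    (hinit : ∀ t ⊆ s, ‖aeval (seqShift 𝕜) (∏ i ∈ t, (X - C (ν i))) A 1‖ ≤ f 1)
    (hs : ∀ n, 1 ≤ n → ‖aeval (seqShift 𝕜) (∏ i ∈ s, (X - C (ν i))) A n‖ ≤ f n)
    (n : ℕ) (hn : 1 ≤ n) : ‖A n‖ ≤ f n * ∏ i ∈ s, ∑ j ∈ range n, ‖ν i‖ ^ j := by
  induction s using Finset.induction_on generalizing f with
  | empty => simpa using hs n hn
  | insert a s has ih =>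
    have hG₀ : ∀ m, 0 ≤ ∑ j ∈ range m, ‖ν a‖ ^ j := fun m => sum_nonneg fun j _ => by positivity
    have hGmono : Monotone fun m => ∑ j ∈ range m, ‖ν a‖ ^ j := fun m k hmk =>
      sum_le_sum_of_subset_of_nonneg (range_subset_range.2 hmk) fun j _ _ => by positivity
    have hstep : ∀ m, 1 ≤ m →
        ‖aeval (seqShift 𝕜) (∏ i ∈ s, (X - C (ν i))) A m‖ ≤ f m * ∑ j ∈ range m, ‖ν a‖ ^ j :=
      norm_le_mul_geom_sum hf (hinit s (subset_insert a s)) fun m hm => by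
        simpa only [prod_insert has, aeval_seqShift_X_sub_C_mul_apply] using hs m hm
    calc ‖A n‖ ≤ (f n * ∑ j ∈ range n, ‖ν a‖ ^ j) * ∏ i ∈ s, ∑ j ∈ range n, ‖ν i‖ ^ j :=
          ih (fun m k hmk => mul_le_mul (hf hmk) (hGmono hmk) (hG₀ m) (hf₀ k))
            (fun m => mul_nonneg (hf₀ m) (hG₀ m))
            (fun t ht => by simpa using hinit t (ht.trans (subset_insert a s))) hstep
      _ = f n * ∏ i ∈ insert a s, ∑ j ∈ range n, ‖ν i‖ ^ j := by rw [prod_insert has, mul_assoc]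

theorem norm_le_of_aeval_seqShift_eq_zero {μ₁ μ₂ : 𝕜} (hμ₁ : ‖μ₁‖ ≤ 1) (hμ₂ : ‖μ₂‖ ≤ 1)
    (ν : ι → 𝕜) (t : Finset ι) (hν : ∀ i ∈ t, ‖ν i‖ ≤ 1) {A : ℕ → 𝕜} {M : ℝ}
    (hA : ∀ n, 1 ≤ n →
      aeval (seqShift 𝕜) ((X - C μ₁) * ((X - C μ₂) * ∏ i ∈ t, (X - C (ν i)))) A n = 0)
    (hM : ∀ j, 1 ≤ j → j ≤ #t + 2 → ‖A j‖ ≤ M) (n : ℕ) (hn : 1 ≤ n) :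
    ‖A n‖ ≤ 2 ^ (#t + 1) * M * n * ∏ i ∈ t, ∑ j ∈ range n, ‖ν i‖ ^ j := by
  have hM₀ : 0 ≤ M := (norm_nonneg _).trans (hM 1 le_rfl (by omega))
  set B := aeval (seqShift 𝕜) (∏ i ∈ t, (X - C (ν i))) A
  set B₂ := aeval (seqShift 𝕜) ((X - C μ₂) * ∏ i ∈ t, (X - C (ν i))) A
  have hB₂_eq (m : ℕ) : B₂ m = B (m + 1) - μ₂ * B m := aeval_seqShift_X_sub_C_mul_apply _ _ _ _
  have hB_init : ∀ m, 1 ≤ m → m ≤ 2 → ‖B m‖ ≤ 2 ^ #t * M := fun m hm hm' =>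
    norm_aeval_seqShift_prod_X_sub_C_le ν A t hν m fun j hj hj' => hM j (by omega) (by omega)
  have hB₂_init : ‖B₂ 1‖ ≤ 2 ^ (#t + 1) * M := by
    calc ‖B₂ 1‖ ≤ ‖B 2‖ + ‖μ₂‖ * ‖B 1‖ := by rw [hB₂_eq, ← norm_mul]; exact norm_sub_le _ _
      _ ≤ 2 ^ #t * M + 1 * (2 ^ #t * M) := by
        gcongr
        exacts [hB_init 2 one_le_two le_rfl, hB_init 1 le_rfl one_le_two]
      _ = 2 ^ (#t + 1) * M := by ring
  have hB₂ : ∀ m, 1 ≤ m → ‖B (m + 1) - μ₂ * B m‖ ≤ 2 ^ (#t + 1) * M := fun m hm => by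
    rw [← hB₂_eq]
    refine (norm_le_norm_one_of_succ_eq_mul hμ₁ (fun k hk => ?_) m hm).trans hB₂_init
    have := hA k hk
    rwa [aeval_seqShift_X_sub_C_mul_apply, sub_eq_zero] at this
  have hB : ∀ m, 1 ≤ m → ‖B m‖ ≤ 2 ^ (#t + 1) * M * m := fun m hm => by
    refine (norm_le_mul_geom_sum monotone_const ?_ hB₂ m hm).trans ?_
    · exact (hB_init 1 le_rfl one_le_two).trans (by gcongr; exacts [one_le_two, by omega])
    · gcongr
      exact geom_sum_le_of_le_one (norm_nonneg _) hμ₂ m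
  refine norm_le_mul_prod_geom_sum ν A t (f := fun m => 2 ^ (#t + 1) * M * m)
    (fun a b hab => by dsimp only; gcongr) (fun m => by positivity) (fun u hu => ?_) hB n hn
  have hut := card_le_card hu
  calc _ ≤ 2 ^ #u * M := norm_aeval_seqShift_prod_X_sub_C_le ν A u (fun i hi => hν i (hu hi)) 1
          fun j hj hj' => hM j hj (by omega)
    _ ≤ 2 ^ (#t + 1) * M * (1 : ℕ) := by
      rw [Nat.cast_one, mul_one]
      gcongr
      exacts [one_le_two, by omega]

end Estimates

theorem Fin.filter_one_le_eq_univ_erase_zero {d : ℕ} (hd : 0 < d) :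
    univ.filter (fun k : Fin d => 1 ≤ (k : ℕ)) = univ.erase ⟨0, hd⟩ := by
  ext k
  simp [Fin.ext_iff, Nat.one_le_iff_ne_zero]

theorem aeval_seqShift_sub_eq_zero_of_recurrence {d : ℕ} (z : Fin d) (lam lamh : Fin d → ℂ)
    (R Rt : ℕ → ℂ)
    (hR : ∀ h : ℕ, d + 1 ≤ h →
      R h = ∑ k ∈ Icc 1 d, (-1 : ℂ) ^ (k + 1) * esymm d lam k * R (h - k))
    (hRt : ∀ h : ℕ, d + 1 ≤ h →
      Rt h = ∑ k ∈ Icc 1 d, (-1 : ℂ) ^ (k + 1) * esymm d lamh k * Rt (h - k))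
    (n : ℕ) (hn : 1 ≤ n) :
    aeval (seqShift ℂ) ((X - C (lam z)) * ((X - C (lamh z)) *
      ∏ i ∈ (univ.erase z).disjSum (univ.erase z), (X - C (Sum.elim lam lamh i)))) (Rt - R) n =
      0 := by
  have hfactor : (∏ i, (X - C (lamh i))) * ∏ i, (X - C (lam i)) =
      (X - C (lam z)) * ((X - C (lamh z)) *
        ∏ i ∈ (univ.erase z).disjSum (univ.erase z), (X - C (Sum.elim lam lamh i))) := by
    rw [prod_disjSum, ← mul_prod_erase univ _ (mem_univ z), ← mul_prod_erase univ _ (mem_univ z)]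
    simp only [Sum.elim_inl, Sum.elim_inr]
    ring
  exact hfactor ▸ aeval_seqShift_mul_apply_sub_eq_zero
    (aeval_seqShift_prod_X_sub_C_eq_zero lamh Rt hRt) (aeval_seqShift_prod_X_sub_C_eq_zero lam R hR)
    n hn

/-- Lemma E.1: adaptive error propagation bound for order-`d` autoregressions, whose
constants depend on the eigenspectra `λ` and `λ̂`. -/
theorem adaptive_error_propagation_bound (d : ℕ) (hd : 1 ≤ d) (lam lamh : Fin d → ℂ)
    (hlam : ∀ k, ‖lam k‖ ≤ 1) (hlamh : ∀ k, ‖lamh k‖ ≤ 1)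
    (R Rt : ℕ → ℂ)
    (hR : ∀ h : ℕ, d + 1 ≤ h →
      R h = ∑ k ∈ Finset.Icc 1 d, (-1 : ℂ) ^ (k + 1) * esymm d lam k * R (h - k))
    (hRt : ∀ h : ℕ, d + 1 ≤ h →
      Rt h = ∑ k ∈ Finset.Icc 1 d, (-1 : ℂ) ^ (k + 1) * esymm d lamh k * Rt (h - k)) :
    ∀ h : ℕ, 1 ≤ h →
      ‖Rt h - R h‖ ≤
        2 ^ (2 * d) * (h : ℝ) *
          (∏ k ∈ Finset.univ.filter (fun k : Fin d => 1 ≤ (k : ℕ)),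
            ∑ j ∈ Finset.range h, ‖lam k‖ ^ j) *
          (∏ k ∈ Finset.univ.filter (fun k : Fin d => 1 ≤ (k : ℕ)),
            ∑ j ∈ Finset.range h, ‖lamh k‖ ^ j) *
          (Finset.Icc 1 (3 * d)).sup' (Finset.nonempty_Icc.mpr (by omega))
            (fun h' => ‖R h' - Rt h'‖) := by
  intro h hh
  set M := (Icc 1 (3 * d)).sup' (nonempty_Icc.mpr (by omega)) fun h' => ‖R h' - Rt h'‖
  have hDM : ∀ j, 1 ≤ j → j ≤ 3 * d → ‖(Rt - R) j‖ ≤ M := fun j hj hj' =>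
    (norm_sub_rev _ _).trans_le (le_sup' (fun h' => ‖R h' - Rt h'‖) (mem_Icc.2 ⟨hj, hj'⟩))
  have hM₀ : 0 ≤ M := (norm_nonneg _).trans (hDM 1 le_rfl (by omega))
  rw [Fin.filter_one_le_eq_univ_erase_zero hd]
  set z : Fin d := ⟨0, hd⟩
  set E := univ.erase z
  have hcard : #(E.disjSum E) + 2 = 2 * d := by
    rw [card_disjSum, card_erase_of_mem (mem_univ z), card_univ, Fintype.card_fin]
    omega
  have hD := norm_le_of_aeval_seqShift_eq_zero (M := M) (hlam z) (hlamh z) (Sum.elim lam lamh)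
    (E.disjSum E) (fun i _ => by rcases i with i | i; exacts [hlam i, hlamh i])
    (aeval_seqShift_sub_eq_zero_of_recurrence z lam lamh R Rt hR hRt)
    (fun j hj hj' => hDM j hj (by omega)) h hh
  rw [prod_disjSum] at hD
  simp only [Sum.elim_inl, Sum.elim_inr, Pi.sub_apply] at hD
  calc ‖Rt h - R h‖ ≤ _ := hD
    _ ≤ 2 ^ (2 * d) * M * h * ((∏ k ∈ E, ∑ j ∈ range h, ‖lam k‖ ^ j) *
          ∏ k ∈ E, ∑ j ∈ range h, ‖lamh k‖ ^ j) := by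
      gcongr
      exacts [one_le_two, by omega]
    _ = _ := by ring
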